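/- arXiv:2207.11835 — 9 statements merged into one kernel-verified Lean document; each statement's English description precedes it below -/
import Mathlib

section
/- Let R, R' > 0 be the reserves of a feeless Uniswap pool, let Δ > 0 be a user trade and η ∈ [0,1) a slippage limit, and let G(x) = R'x/(R+x) be the forward exchange function. Then s* = ( −(Δ+2R) + √((Δ+2R)² + 4(R²+RΔ)·η/(1−η)) )/2 is nonnegative and satisfies the optimal sandwich equation G(Δ+s*) − G(s*) = (1−η)·G(Δ); moreover s* is the unique nonnegative real solution of this equation. -/
/-!
The output difference `G (Δ + s) - G s` equals `R' R Δ / ((R + Δ + s) (R + s))`, so after clearing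
denominators the sandwich equation becomes the quadratic `s² + (Δ + 2R) s = (R² + RΔ) η / (1 - η)`.
Completing the square turns `s² + b s = c` into `(2s + b)² = b² + 4c`; for `b, s ≥ 0` the base
`2s + b` is nonnegative, so it must be `√(b² + 4c)`, i.e. `s = s*`.
-/

open Real

theorem neg_add_sqrt_sq_add_four_mul_nonneg {b c : ℝ} (hc : 0 ≤ c) :
    0 ≤ (-b + √(b ^ 2 + 4 * c)) / 2 := by
  have : b ≤ √(b ^ 2 + 4 * c) :=
    (le_abs_self b).trans ((sqrt_sq_eq_abs b).symm.le.trans (sqrt_le_sqrt (by linarith)))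
  linarith

theorem sq_add_mul_eq_iff_of_nonneg {b c s : ℝ} (hb : 0 ≤ b) (hc : 0 ≤ c) (hs : 0 ≤ s) :
    s ^ 2 + b * s = c ↔ s = (-b + √(b ^ 2 + 4 * c)) / 2 := by
  have hdisc : 0 ≤ b ^ 2 + 4 * c := by positivity
  calc s ^ 2 + b * s = c ↔ b ^ 2 + 4 * c = (2 * s + b) ^ 2 := by
        constructor <;> intro h <;> linarith
    _ ↔ √(b ^ 2 + 4 * c) = 2 * s + b := (sqrt_eq_iff_eq_sq hdisc (by positivity)).symm
    _ ↔ s = (-b + √(b ^ 2 + 4 * c)) / 2 := by constructor <;> intro h <;> linarith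

noncomputable def cpmmOut (R R' x : ℝ) : ℝ := R' * x / (R + x)

theorem cpmmOut_sub_cpmmOut {R R' x y : ℝ} (hx : R + x ≠ 0) (hy : R + y ≠ 0) :
    cpmmOut R R' x - cpmmOut R R' y = R' * R * (x - y) / ((R + x) * (R + y)) := by
  unfold cpmmOut
  field_simp
  ring

theorem cpmmOut_sandwich_eq_iff {R R' Δ η s : ℝ} (hR : 0 < R) (hR' : R' ≠ 0) (hΔ : 0 < Δ)
    (hη : η ≠ 1) (hs : 0 ≤ s) :
    cpmmOut R R' (Δ + s) - cpmmOut R R' s = (1 - η) * cpmmOut R R' Δ ↔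
      s ^ 2 + (Δ + 2 * R) * s = (R ^ 2 + R * Δ) * (η / (1 - η)) := by
  have h1η : 1 - η ≠ 0 := sub_ne_zero.mpr hη.symm
  have hRΔs : 0 < R + (Δ + s) := by positivity
  have hRs : 0 < R + s := by positivity
  have hRΔ : 0 < R + Δ := by positivity
  rw [cpmmOut_sub_cpmmOut hRΔs.ne' hRs.ne', cpmmOut, add_sub_cancel_right, mul_div_assoc',
    div_eq_div_iff (by positivity) hRΔ.ne', mul_div_assoc', eq_div_iff h1η]
  have hR'Δ : R' * Δ ≠ 0 := mul_ne_zero hR' hΔ.ne'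
  constructor
  · intro h
    have : R * (R + Δ) = (1 - η) * ((R + (Δ + s)) * (R + s)) :=
      mul_left_cancel₀ hR'Δ (by linear_combination h)
    linear_combination -this
  · intro h
    linear_combination (-(R' * Δ)) * h

/-- For a feeless Uniswap pool with reserves `R, R' > 0`, forward
exchange function `G x = R' * x / (R + x)`, user trade `Δ > 0` and slippage
`η ∈ [0,1)`, the closed-form `s*` is nonnegative, satisfies the optimal
sandwich equation `G (Δ + s*) - G s* = (1 - η) * G Δ`, and is the unique
nonnegative solution of this equation. -/
theorem uniswap_optimal_sandwich_closed_form
    (R R' Δ η : ℝ) (hR : 0 < R) (hR' : 0 < R') (hΔ : 0 < Δ)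
    (hη0 : 0 ≤ η) (hη1 : η < 1)
    (G : ℝ → ℝ) (hG : ∀ x, G x = R' * x / (R + x))
    (sstar : ℝ)
    (hs : sstar =
      (-(Δ + 2 * R) +
        Real.sqrt ((Δ + 2 * R) ^ 2 + 4 * (R ^ 2 + R * Δ) * (η / (1 - η)))) / 2) :
    0 ≤ sstar ∧
    G (Δ + sstar) - G sstar = (1 - η) * G Δ ∧
    ∀ s : ℝ, 0 ≤ s → G (Δ + s) - G s = (1 - η) * G Δ → s = sstar := by
  obtain rfl : G = cpmmOut R R' := funext hG
  rw [mul_assoc 4] at hs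
  have hb : 0 ≤ Δ + 2 * R := by positivity
  have hc : 0 ≤ (R ^ 2 + R * Δ) * (η / (1 - η)) := by
    have : 0 < 1 - η := sub_pos.mpr hη1
    positivity
  have hsstar : 0 ≤ sstar := hs ▸ neg_add_sqrt_sq_add_four_mul_nonneg hc
  have hsandwich : ∀ s, 0 ≤ s →
      (cpmmOut R R' (Δ + s) - cpmmOut R R' s = (1 - η) * cpmmOut R R' Δ ↔ s = sstar) := by
    intro s hs0
    rw [cpmmOut_sandwich_eq_iff hR hR'.ne' hΔ hη1.ne hs0, hs]
    exact sq_add_mul_eq_iff_of_nonneg hb hc hs0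
  exact ⟨hsstar, (hsandwich sstar hsstar).mpr rfl, fun s hs0 => (hsandwich s hs0).mp⟩
end

section
/- Let R, R' > 0 be the reserves of a feeless Uniswap pool with forward exchange function G(x) = R'x/(R+x), let Δ > 0 be a user trade and η ∈ [0,1) a slippage limit. Then the sandwich attacker's profit PNL(Δ,η) = Δ − G⁻¹( (1−η)·G(Δ) ), measured in input tokens, equals η·Δ·(R+Δ) / (R + ηΔ). In particular PNL(Δ,0) = 0 and PNL is independent of the output reserve R'. -/
/-! At `y = (1-η)·G(Δ)` the denominator of `G⁻¹ y = R y/(R' - y)` is `R'(R+ηΔ)/(R+Δ)`, so the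
factor `R'` cancels against the one in `y` and `Δ - G⁻¹ y` is a rational function of `R, Δ, η`
alone; clearing denominators gives the closed form. -/

section ConstantProduct

variable {K : Type*} [Field K]

def constantProductOut (R R' x : K) : K := R' * x / (R + x)

def constantProductIn (R R' y : K) : K := R * y / (R' - y)

lemma sub_mul_constantProductOut {R R' Δ : K} (η : K) (hRΔ : R + Δ ≠ 0) :
    R' - (1 - η) * constantProductOut R R' Δ = R' * (R + η * Δ) / (R + Δ) := by
  unfold constantProductOut
  field_simp
  ring

theorem sub_constantProductIn_mul_constantProductOut {R R' Δ η : K} (hRΔ : R + Δ ≠ 0)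
    (hR' : R' ≠ 0) (hRηΔ : R + η * Δ ≠ 0) :
    Δ - constantProductIn R R' ((1 - η) * constantProductOut R R' Δ) =
      η * Δ * (R + Δ) / (R + η * Δ) := by
  rw [constantProductIn, sub_mul_constantProductOut η hRΔ, constantProductOut]
  -- `field_simp` normalises `η * Δ` to `Δ * η` and would then miss `hRηΔ`.
  rw [mul_comm η Δ] at hRηΔ ⊢
  field_simp
  ring

end ConstantProduct

theorem uniswap_sandwich_profit_closed_form_general
    (R R' Δ η : ℝ) (hR : 0 < R) (hR' : 0 < R') (hΔ : 0 < Δ)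
    (hη0 : 0 ≤ η)
    (G Ginv : ℝ → ℝ)
    (hG : ∀ x, G x = R' * x / (R + x))
    (hGinv : ∀ y, Ginv y = R * y / (R' - y)) :
    Δ - Ginv ((1 - η) * G Δ) = η * Δ * (R + Δ) / (R + η * Δ) ∧
    Δ - Ginv ((1 - 0) * G Δ) = 0 ∧
    (∀ R'' : ℝ, 0 < R'' →
      ∀ G₂ Ginv₂ : ℝ → ℝ,
        (∀ x, G₂ x = R'' * x / (R + x)) →
        (∀ y, Ginv₂ y = R * y / (R'' - y)) →
        Δ - Ginv₂ ((1 - η) * G₂ Δ) = Δ - Ginv ((1 - η) * G Δ)) := by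
  obtain rfl : G = constantProductOut R R' := funext hG
  obtain rfl : Ginv = constantProductIn R R' := funext hGinv
  have hRΔ : R + Δ ≠ 0 := by positivity
  have hRηΔ : R + η * Δ ≠ 0 := by positivity
  have profit := sub_constantProductIn_mul_constantProductOut hRΔ hR'.ne' hRηΔ
  refine ⟨profit, ?_, fun R'' hR'' G₂ Ginv₂ hG₂ hGinv₂ => ?_⟩
  · simpa using sub_constantProductIn_mul_constantProductOut (η := 0) hRΔ hR'.ne'
      (by simpa using hR.ne')
  · obtain rfl : G₂ = constantProductOut R R'' := funext hG₂
    obtain rfl : Ginv₂ = constantProductIn R R'' := funext hGinv₂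
    rw [profit, sub_constantProductIn_mul_constantProductOut hRΔ hR''.ne' hRηΔ]

/-- For a feeless Uniswap pool with reserves `R, R' > 0`,
forward exchange function `G x = R' x/(R+x)` with inverse
`Ginv y = R y/(R' - y)`, a user trade `Δ > 0` and slippage `η ∈ [0,1)`,
the sandwich attacker's profit `PNL(Δ,η) = Δ - Ginv ((1-η) * G Δ)` equals
`η·Δ·(R+Δ)/(R+ηΔ)`; in particular the profit vanishes at `η = 0` and is
independent of the output reserve `R'` (for any other output reserve
`R'' > 0` the profit is the same). -/
theorem uniswap_sandwich_profit_closed_form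
    (R R' Δ η : ℝ) (hR : 0 < R) (hR' : 0 < R') (hΔ : 0 < Δ)
    (hη0 : 0 ≤ η) (hη1 : η < 1)
    (G Ginv : ℝ → ℝ)
    (hG : ∀ x, G x = R' * x / (R + x))
    (hGinv : ∀ y, Ginv y = R * y / (R' - y)) :
    Δ - Ginv ((1 - η) * G Δ) = η * Δ * (R + Δ) / (R + η * Δ) ∧
    Δ - Ginv ((1 - 0) * G Δ) = 0 ∧
    (∀ R'' : ℝ, 0 < R'' →
      ∀ G₂ Ginv₂ : ℝ → ℝ,
        (∀ x, G₂ x = R'' * x / (R + x)) →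
        (∀ y, Ginv₂ y = R * y / (R'' - y)) →
        Δ - Ginv₂ ((1 - η) * G₂ Δ) = Δ - Ginv ((1 - η) * G Δ)) :=
  uniswap_sandwich_profit_closed_form_general R R' Δ η hR hR' hΔ hη0 G Ginv hG hGinv
end

section
/- Let 0 < κ < μ, M > 0, and let G : ℝ → ℝ satisfy G(0) = 0 and κt ≤ G(t) ≤ μt for all t ∈ [0,M]. Let Δ ∈ (0,M], η ∈ [0,1], and s ≥ 0 with Δ + s ≤ M satisfy the sandwich equation G(Δ+s) − G(s) = (1−η)·G(Δ). Then the sandwich size satisfies (μ−κ)·s ≥ (ημ − (μ−κ))·Δ, i.e. s ≥ ( ημ/(μ−κ) − 1 )·Δ; in particular the bound is linear in the slippage η and is nonnegative whenever η ≥ 1 − κ/μ. -/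
/-! Evaluate the sandwich equation with the lower bound at `Δ + s` and the upper bounds at `s`
and `Δ`: `κ (Δ + s) ≤ G (Δ + s) = G s + (1 - η) G Δ ≤ μ s + (1 - η) μ Δ`, which rearranges to
`(μ - κ) s ≥ (η μ - (μ - κ)) Δ`. The other two claims are this inequality divided by `μ - κ`. -/

theorem sandwich_size_mul_ge {G : ℝ → ℝ} {κ μ Δ η s : ℝ}
    (hlb : κ * (Δ + s) ≤ G (Δ + s)) (hub_s : G s ≤ μ * s) (hub_Δ : G Δ ≤ μ * Δ) (hη : η ≤ 1)
    (hsand : G (Δ + s) - G s = (1 - η) * G Δ) :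
    (η * μ - (μ - κ)) * Δ ≤ (μ - κ) * s := by
  have hslip : (1 - η) * G Δ ≤ (1 - η) * (μ * Δ) :=
    mul_le_mul_of_nonneg_left hub_Δ (sub_nonneg.2 hη)
  linear_combination hlb + hub_s + hslip + hsand

theorem div_sub_one_mul_le_of_sub_mul_le {a c Δ s : ℝ} (hc : 0 < c)
    (h : (a - c) * Δ ≤ c * s) : (a / c - 1) * Δ ≤ s := by
  rw [div_sub_one hc.ne', div_mul_eq_mul_div, div_le_iff₀ hc, mul_comm s]
  exact h

theorem one_le_mul_div_sub_of_one_sub_div_le {κ μ η : ℝ} (hμ : 0 < μ) (hκμ : κ < μ)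
    (hη : 1 - κ / μ ≤ η) : 1 ≤ η * μ / (μ - κ) := by
  rw [le_div_iff₀ (sub_pos.2 hκμ), one_mul]
  have := mul_le_mul_of_nonneg_right hη hμ.le
  rwa [sub_mul, div_mul_cancel₀ κ hμ.ne', one_mul] at this

theorem sandwich_size_lower_bound_smooth_general
    (κ μ M Δ η s : ℝ) (G : ℝ → ℝ)
    (hκ : 0 < κ) (hκμ : κ < μ)
    (hGlb : ∀ t ∈ Set.Icc (0 : ℝ) M, κ * t ≤ G t)
    (hGub : ∀ t ∈ Set.Icc (0 : ℝ) M, G t ≤ μ * t)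
    (hΔ0 : 0 < Δ) (hΔM : Δ ≤ M)
    (hη1 : η ≤ 1)
    (hs0 : 0 ≤ s) (hsM : Δ + s ≤ M)
    (hsand : G (Δ + s) - G s = (1 - η) * G Δ) :
    (μ - κ) * s ≥ (η * μ - (μ - κ)) * Δ ∧
    s ≥ (η * μ / (μ - κ) - 1) * Δ ∧
    (η ≥ 1 - κ / μ → 0 ≤ (η * μ / (μ - κ) - 1) * Δ) := by
  have key : (η * μ - (μ - κ)) * Δ ≤ (μ - κ) * s :=
    sandwich_size_mul_ge (hGlb _ ⟨by positivity, hsM⟩) (hGub _ ⟨hs0, by linarith⟩)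
      (hGub _ ⟨hΔ0.le, hΔM⟩) hη1 hsand
  refine ⟨key, div_sub_one_mul_le_of_sub_mul_le (sub_pos.2 hκμ) key, fun hη => ?_⟩
  exact mul_nonneg (sub_nonneg.2 (one_le_mul_div_sub_of_one_sub_div_le (hκ.trans hκμ) hκμ hη))
    hΔ0.le

/-- If `G` is `(μ,κ)`-smooth on `[0,M]` (with `0 < κ < μ`,
`G 0 = 0`, `κ t ≤ G t ≤ μ t` on `[0,M]`), `Δ ∈ (0,M]`, `η ∈ [0,1]`, and
`s ≥ 0` with `Δ + s ≤ M` satisfies the sandwich equation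
`G (Δ+s) - G s = (1-η) G Δ`, then `(μ-κ) s ≥ (ημ - (μ-κ)) Δ`, i.e.
`s ≥ (ημ/(μ-κ) - 1) Δ`; in particular this lower bound is nonnegative
whenever `η ≥ 1 - κ/μ`. -/
theorem sandwich_size_lower_bound_smooth
    (κ μ M Δ η s : ℝ) (G : ℝ → ℝ)
    (hκ : 0 < κ) (hκμ : κ < μ) (hM : 0 < M)
    (hG0 : G 0 = 0)
    (hGlb : ∀ t ∈ Set.Icc (0 : ℝ) M, κ * t ≤ G t)
    (hGub : ∀ t ∈ Set.Icc (0 : ℝ) M, G t ≤ μ * t)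
    (hΔ0 : 0 < Δ) (hΔM : Δ ≤ M)
    (hη0 : 0 ≤ η) (hη1 : η ≤ 1)
    (hs0 : 0 ≤ s) (hsM : Δ + s ≤ M)
    (hsand : G (Δ + s) - G s = (1 - η) * G Δ) :
    (μ - κ) * s ≥ (η * μ - (μ - κ)) * Δ ∧
    s ≥ (η * μ / (μ - κ) - 1) * Δ ∧
    (η ≥ 1 - κ / μ → 0 ≤ (η * μ / (μ - κ) - 1) * Δ) :=
  sandwich_size_lower_bound_smooth_general κ μ M Δ η s G hκ hκμ hGlb hGub hΔ0 hΔM hη1 hs0 hsM hsand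
end

section
/- Let β > 0, g₀ ≥ 0, μ > 0, K > 0, and let G : ℝ → ℝ satisfy G(0) = 0, G(t) ≥ (β/2)t² + g₀·t for all t ∈ [0,K] (β-liquidity of the forward exchange rate), and G(t) ≤ μt for all t ∈ [0,K]. Let Δ ∈ (0,K], η ∈ [0,1], and s ≥ 0 with Δ + s ≤ K satisfy G(Δ+s) − G(s) = (1−η)·G(Δ). Then s satisfies the quadratic constraint (β/2)·s² + (βΔ + g₀ − μ)·s + ( (β/2)Δ² + g₀Δ − (1−η)μΔ ) ≤ 0; consequently s is at most the larger root of the corresponding quadratic, so β-liquidity bounds the size of any sandwich attack. -/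
/-! Evaluate the sandwich equation with the liquidity lower bound at `Δ + s` and the linear upper
bound at `s` and at `Δ`: this turns it into a quadratic inequality in `s` with positive leading
coefficient `β / 2`, and `s` therefore lies below the larger root. -/

lemma sq_two_mul_add_le_discrim {a b c x : ℝ} (ha : 0 ≤ a) (h : a * x ^ 2 + b * x + c ≤ 0) :
    (2 * a * x + b) ^ 2 ≤ discrim a b c := by
  have hsq : (2 * a * x + b) ^ 2 = discrim a b c + 4 * a * (a * x ^ 2 + b * x + c) := by
    rw [discrim]; ring
  rw [hsq]
  linarith [mul_nonpos_of_nonneg_of_nonpos (by positivity : (0 : ℝ) ≤ 4 * a) h]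

lemma le_quadratic_root_of_nonpos {a b c x : ℝ} (ha : 0 < a) (h : a * x ^ 2 + b * x + c ≤ 0) :
    x ≤ (-b + √(discrim a b c)) / (2 * a) := by
  have hroot : 2 * a * x + b ≤ √(discrim a b c) :=
    (le_abs_self _).trans (Real.abs_le_sqrt (sq_two_mul_add_le_discrim ha.le h))
  rw [le_div_iff₀ (by positivity)]
  linarith

lemma sandwich_quadratic_nonpos {G : ℝ → ℝ} {β g₀ μ Δ η s : ℝ}
    (hlb : (β / 2) * (Δ + s) ^ 2 + g₀ * (Δ + s) ≤ G (Δ + s))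
    (hub_s : G s ≤ μ * s) (hub_Δ : G Δ ≤ μ * Δ) (hη : η ≤ 1)
    (hsand : G (Δ + s) - G s = (1 - η) * G Δ) :
    (β / 2) * s ^ 2 + (β * Δ + g₀ - μ) * s +
      ((β / 2) * Δ ^ 2 + g₀ * Δ - (1 - η) * μ * Δ) ≤ 0 := by
  have hfront : (β / 2) * (Δ + s) ^ 2 + g₀ * (Δ + s) - μ * s ≤ (1 - η) * (μ * Δ) :=
    calc (β / 2) * (Δ + s) ^ 2 + g₀ * (Δ + s) - μ * s ≤ G (Δ + s) - G s := by linarith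
      _ = (1 - η) * G Δ := hsand
      _ ≤ (1 - η) * (μ * Δ) := mul_le_mul_of_nonneg_left hub_Δ (by linarith)
  linarith

theorem sandwich_size_quadratic_bound_liquid_general
    (β g₀ μ K Δ η s : ℝ) (G : ℝ → ℝ)
    (hβ : 0 < β)
    (hGlb : ∀ t ∈ Set.Icc (0 : ℝ) K, (β / 2) * t ^ 2 + g₀ * t ≤ G t)
    (hGub : ∀ t ∈ Set.Icc (0 : ℝ) K, G t ≤ μ * t)
    (hΔ0 : 0 < Δ) (hΔK : Δ ≤ K)
    (hη1 : η ≤ 1)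
    (hs0 : 0 ≤ s) (hsK : Δ + s ≤ K)
    (hsand : G (Δ + s) - G s = (1 - η) * G Δ) :
    (β / 2) * s ^ 2 + (β * Δ + g₀ - μ) * s +
      ((β / 2) * Δ ^ 2 + g₀ * Δ - (1 - η) * μ * Δ) ≤ 0 ∧
    s ≤ (-(β * Δ + g₀ - μ) +
          Real.sqrt ((β * Δ + g₀ - μ) ^ 2 -
            4 * (β / 2) * ((β / 2) * Δ ^ 2 + g₀ * Δ - (1 - η) * μ * Δ))) /
        (2 * (β / 2)) := by
  have hquad := sandwich_quadratic_nonpos (hGlb _ ⟨by linarith, hsK⟩)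
    (hGub _ ⟨hs0, by linarith⟩) (hGub _ ⟨hΔ0.le, hΔK⟩) hη1 hsand
  exact ⟨hquad, le_quadratic_root_of_nonpos (half_pos hβ) hquad⟩

/-- If `G 0 = 0`, `G t ≥ (β/2)t² + g₀ t` on `[0,K]`
(β-liquidity of the forward exchange rate) and `G t ≤ μ t` on `[0,K]`,
`Δ ∈ (0,K]`, `η ∈ [0,1]`, and `s ≥ 0` with `Δ + s ≤ K` satisfies the
sandwich equation `G (Δ+s) - G s = (1-η) G Δ`, then `s` satisfies the
quadratic constraint
`(β/2) s² + (βΔ + g₀ - μ) s + ((β/2)Δ² + g₀Δ - (1-η)μΔ) ≤ 0`;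
consequently `s` is at most the larger root of the corresponding quadratic. -/
theorem sandwich_size_quadratic_bound_liquid
    (β g₀ μ K Δ η s : ℝ) (G : ℝ → ℝ)
    (hβ : 0 < β) (hg₀ : 0 ≤ g₀) (hμ : 0 < μ) (hK : 0 < K)
    (hG0 : G 0 = 0)
    (hGlb : ∀ t ∈ Set.Icc (0 : ℝ) K, (β / 2) * t ^ 2 + g₀ * t ≤ G t)
    (hGub : ∀ t ∈ Set.Icc (0 : ℝ) K, G t ≤ μ * t)
    (hΔ0 : 0 < Δ) (hΔK : Δ ≤ K)
    (hη0 : 0 ≤ η) (hη1 : η ≤ 1)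
    (hs0 : 0 ≤ s) (hsK : Δ + s ≤ K)
    (hsand : G (Δ + s) - G s = (1 - η) * G Δ) :
    (β / 2) * s ^ 2 + (β * Δ + g₀ - μ) * s +
      ((β / 2) * Δ ^ 2 + g₀ * Δ - (1 - η) * μ * Δ) ≤ 0 ∧
    s ≤ (-(β * Δ + g₀ - μ) +
          Real.sqrt ((β * Δ + g₀ - μ) ^ 2 -
            4 * (β / 2) * ((β / 2) * Δ ^ 2 + g₀ * Δ - (1 - η) * μ * Δ))) /
        (2 * (β / 2)) :=
  sandwich_size_quadratic_bound_liquid_general β g₀ μ K Δ η s G hβ hGlb hGub hΔ0 hΔK hη1 hs0 hsK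
    hsand
end

section
/- Let 0 < κ ≤ μ, M > 0, and let G : ℝ → ℝ satisfy G(0) = 0 and κt ≤ G(t) ≤ μt for all t ∈ [0,M]. Let Δ ∈ (0,M], η ∈ [0,1], and let w ∈ [0,M] satisfy G(w) = (1−η)·G(Δ). Then the sandwich profit PNL = Δ − w satisfies the upper bound PNL ≤ ( (μ−κ) + ηκ )·Δ/μ. In particular, when κ = μ the profit is at most ηΔ, linear in the slippage limit. -/
/-! Feeding the lower smoothness bound at `Δ` and the upper one at `w` into
`G w = (1 - η) G Δ` gives `(1 - η) κ Δ ≤ μ w`, so `w ≥ (1 - η) κ Δ / μ`, which bounds `Δ - w`. -/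

lemma mul_mul_le_mul_of_apply_eq_mul {G : ℝ → ℝ} {κ μ c Δ w : ℝ} (hc : 0 ≤ c)
    (hlb : κ * Δ ≤ G Δ) (hub : G w ≤ μ * w) (hGw : G w = c * G Δ) :
    c * (κ * Δ) ≤ μ * w :=
  calc c * (κ * Δ) ≤ c * G Δ := mul_le_mul_of_nonneg_left hlb hc
    _ = G w := hGw.symm
    _ ≤ μ * w := hub

lemma sub_le_of_mul_le_mul {κ μ η Δ w : ℝ} (hμ : 0 < μ) (h : (1 - η) * (κ * Δ) ≤ μ * w) :
    Δ - w ≤ ((μ - κ) + η * κ) * Δ / μ := by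
  rw [le_div_iff₀ hμ]
  linarith

theorem sandwich_profit_upper_bound_smooth_general
    (κ μ M Δ η w : ℝ) (G : ℝ → ℝ)
    (hκ : 0 < κ) (hκμ : κ ≤ μ)
    (hGlb : ∀ t ∈ Set.Icc (0 : ℝ) M, κ * t ≤ G t)
    (hGub : ∀ t ∈ Set.Icc (0 : ℝ) M, G t ≤ μ * t)
    (hΔ0 : 0 < Δ) (hΔM : Δ ≤ M)
    (hη1 : η ≤ 1)
    (hw : w ∈ Set.Icc (0 : ℝ) M)
    (hGw : G w = (1 - η) * G Δ) :
    Δ - w ≤ ((μ - κ) + η * κ) * Δ / μ ∧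
    (κ = μ → Δ - w ≤ η * Δ) := by
  have hμ : 0 < μ := hκ.trans_le hκμ
  have hbound : Δ - w ≤ ((μ - κ) + η * κ) * Δ / μ :=
    sub_le_of_mul_le_mul hμ <| mul_mul_le_mul_of_apply_eq_mul (sub_nonneg.mpr hη1)
      (hGlb Δ ⟨hΔ0.le, hΔM⟩) (hGub w hw) hGw
  refine ⟨hbound, fun hκμ_eq => ?_⟩
  subst hκμ_eq
  rwa [sub_self, zero_add, mul_right_comm, mul_div_cancel_right₀ _ hκ.ne'] at hbound

/-- If `G` is `(μ,κ)`-smooth on `[0,M]` (`0 < κ ≤ μ`, `G 0 = 0`,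
`κ t ≤ G t ≤ μ t` on `[0,M]`), `Δ ∈ (0,M]`, `η ∈ [0,1]`, and `w ∈ [0,M]`
satisfies `G w = (1-η) G Δ`, then the sandwich profit `PNL = Δ - w` satisfies
`PNL ≤ ((μ-κ) + ηκ) Δ / μ`; in particular when `κ = μ` the profit is at
most `η Δ`. -/
theorem sandwich_profit_upper_bound_smooth
    (κ μ M Δ η w : ℝ) (G : ℝ → ℝ)
    (hκ : 0 < κ) (hκμ : κ ≤ μ) (hM : 0 < M)
    (hG0 : G 0 = 0)
    (hGlb : ∀ t ∈ Set.Icc (0 : ℝ) M, κ * t ≤ G t)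
    (hGub : ∀ t ∈ Set.Icc (0 : ℝ) M, G t ≤ μ * t)
    (hΔ0 : 0 < Δ) (hΔM : Δ ≤ M)
    (hη0 : 0 ≤ η) (hη1 : η ≤ 1)
    (hw : w ∈ Set.Icc (0 : ℝ) M)
    (hGw : G w = (1 - η) * G Δ) :
    Δ - w ≤ ((μ - κ) + η * κ) * Δ / μ ∧
    (κ = μ → Δ - w ≤ η * Δ) :=
  sandwich_profit_upper_bound_smooth_general κ μ M Δ η w G hκ hκμ hGlb hGub hΔ0 hΔM hη1 hw hGw
end

section
/- Let 0 < κ ≤ μ, M > 0, and let G : ℝ → ℝ satisfy G(0) = 0 and κt ≤ G(t) ≤ μt for all t ∈ [0,M]. Let Δ ∈ (0,M], η ∈ [0,1], and let w ∈ [0,M] satisfy G(w) = (1−η)·G(Δ). Then the sandwich profit PNL = Δ − w satisfies the lower bound PNL ≥ ( κ − (1−η)μ )·Δ/κ. -/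
/-! The lower smoothness bound at `w` and the upper one at `Δ` give
`κ w ≤ G w = (1 - η) G Δ ≤ (1 - η) μ Δ`, so the attacker's residual trade `w` is at most
`(1 - η) μ Δ / κ`. -/

theorem mul_le_mul_mul_of_apply_eq_mul {G : ℝ → ℝ} {κ μ c w Δ : ℝ}
    (hGw_lb : κ * w ≤ G w) (hGΔ_ub : G Δ ≤ μ * Δ) (hc : 0 ≤ c) (hGw : G w = c * G Δ) :
    κ * w ≤ c * μ * Δ :=
  calc κ * w ≤ G w := hGw_lb
    _ = c * G Δ := hGw
    _ ≤ c * (μ * Δ) := mul_le_mul_of_nonneg_left hGΔ_ub hc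
    _ = c * μ * Δ := (mul_assoc c μ Δ).symm

theorem sandwich_profit_lower_bound_smooth_general
    (κ μ M Δ η w : ℝ) (G : ℝ → ℝ)
    (hκ : 0 < κ)
    (hGlb : ∀ t ∈ Set.Icc (0 : ℝ) M, κ * t ≤ G t)
    (hGub : ∀ t ∈ Set.Icc (0 : ℝ) M, G t ≤ μ * t)
    (hΔ0 : 0 < Δ) (hΔM : Δ ≤ M)
    (hη1 : η ≤ 1)
    (hw : w ∈ Set.Icc (0 : ℝ) M)
    (hGw : G w = (1 - η) * G Δ) :
    Δ - w ≥ (κ - (1 - η) * μ) * Δ / κ := by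
  have hκw : κ * w ≤ (1 - η) * μ * Δ :=
    mul_le_mul_mul_of_apply_eq_mul (hGlb w hw) (hGub Δ ⟨hΔ0.le, hΔM⟩) (sub_nonneg.2 hη1) hGw
  rw [ge_iff_le, div_le_iff₀ hκ]
  linarith

/-- If `G` is `(μ,κ)`-smooth on `[0,M]` (`0 < κ ≤ μ`, `G 0 = 0`,
`κ t ≤ G t ≤ μ t` on `[0,M]`), `Δ ∈ (0,M]`, `η ∈ [0,1]`, and `w ∈ [0,M]`
satisfies `G w = (1-η) G Δ`, then the sandwich profit `PNL = Δ - w` satisfies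
the lower bound `PNL ≥ (κ - (1-η)μ) Δ / κ`. -/
theorem sandwich_profit_lower_bound_smooth
    (κ μ M Δ η w : ℝ) (G : ℝ → ℝ)
    (hκ : 0 < κ) (hκμ : κ ≤ μ) (hM : 0 < M)
    (hG0 : G 0 = 0)
    (hGlb : ∀ t ∈ Set.Icc (0 : ℝ) M, κ * t ≤ G t)
    (hGub : ∀ t ∈ Set.Icc (0 : ℝ) M, G t ≤ μ * t)
    (hΔ0 : 0 < Δ) (hΔM : Δ ≤ M)
    (hη0 : 0 ≤ η) (hη1 : η ≤ 1)
    (hw : w ∈ Set.Icc (0 : ℝ) M)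
    (hGw : G w = (1 - η) * G Δ) :
    Δ - w ≥ (κ - (1 - η) * μ) * Δ / κ :=
  sandwich_profit_lower_bound_smooth_general κ μ M Δ η w G hκ hGlb hGub hΔ0 hΔM hη1 hw hGw
end

section
/- Let 0 < κ < μ, M > 0, and let G : ℝ → ℝ satisfy G(0) = 0 and κt ≤ G(t) ≤ μt for all t ∈ [0,M]. Let Δ ∈ (0,M], η ∈ [0,1], let s ≥ 0 with Δ + s ≤ M satisfy G(Δ+s) − G(s) = (1−η)·G(Δ), let w ∈ [0,M] satisfy G(w) = (1−η)·G(Δ), and set Δsand' = s + Δ − w (the attacker's back-run trade in input-token units). Then Δsand' ≥ ( (ημ − (μ−κ))/(μ−κ) + (κ − (1−η)μ)/κ )·Δ. -/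
/-!
Both legs of the sandwich are bounded separately using only the smoothness bounds
`κ t ≤ G t ≤ μ t`.  The front-run condition gives
`κ (Δ + s) - μ s ≤ G (Δ + s) - G s = (1 - η) G Δ ≤ (1 - η) μ Δ`, a lower bound on `s`;
the back-run condition gives `κ w ≤ G w = (1 - η) G Δ ≤ (1 - η) μ Δ`, an upper bound on `w`.
-/

open Set

section SmoothExchange

variable {κ μ M η Δ : ℝ} {G : ℝ → ℝ}

lemma front_run_lower_bound {s : ℝ}
    (hGlb : ∀ t ∈ Icc (0 : ℝ) M, κ * t ≤ G t) (hGub : ∀ t ∈ Icc (0 : ℝ) M, G t ≤ μ * t)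
    (hκμ : κ < μ) (hη1 : η ≤ 1) (hΔ0 : 0 ≤ Δ) (hs0 : 0 ≤ s) (hsM : Δ + s ≤ M)
    (hsand : G (Δ + s) - G s = (1 - η) * G Δ) :
    (η * μ - (μ - κ)) / (μ - κ) * Δ ≤ s := by
  have hΔs : κ * (Δ + s) ≤ G (Δ + s) := hGlb _ ⟨by linarith, hsM⟩
  have hs : G s ≤ μ * s := hGub s ⟨hs0, by linarith⟩
  have hΔ := mul_le_mul_of_nonneg_left (hGub Δ ⟨hΔ0, by linarith⟩) (sub_nonneg.mpr hη1)
  rw [div_mul_eq_mul_div, div_le_iff₀ (sub_pos.mpr hκμ)]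
  linarith

lemma slippage_gap_lower_bound {w : ℝ}
    (hGlb : ∀ t ∈ Icc (0 : ℝ) M, κ * t ≤ G t) (hGub : ∀ t ∈ Icc (0 : ℝ) M, G t ≤ μ * t)
    (hκ : 0 < κ) (hη1 : η ≤ 1) (hΔ : Δ ∈ Icc (0 : ℝ) M) (hw : w ∈ Icc (0 : ℝ) M)
    (hGw : G w = (1 - η) * G Δ) :
    (κ - (1 - η) * μ) / κ * Δ ≤ Δ - w := by
  have hκw : κ * w ≤ G w := hGlb w hw
  have hGΔ := mul_le_mul_of_nonneg_left (hGub Δ hΔ) (sub_nonneg.mpr hη1)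
  rw [div_mul_eq_mul_div, div_le_iff₀ hκ]
  linarith

end SmoothExchange

theorem back_run_trade_lower_bound_general
    (κ μ M Δ η s w : ℝ) (G : ℝ → ℝ)
    (hκ : 0 < κ) (hκμ : κ < μ)
    (hGlb : ∀ t ∈ Set.Icc (0 : ℝ) M, κ * t ≤ G t)
    (hGub : ∀ t ∈ Set.Icc (0 : ℝ) M, G t ≤ μ * t)
    (hΔ0 : 0 < Δ) (hΔM : Δ ≤ M)
    (hη1 : η ≤ 1)
    (hs0 : 0 ≤ s) (hsM : Δ + s ≤ M)
    (hsand : G (Δ + s) - G s = (1 - η) * G Δ)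
    (hw : w ∈ Set.Icc (0 : ℝ) M)
    (hGw : G w = (1 - η) * G Δ) :
    s + Δ - w ≥ ((η * μ - (μ - κ)) / (μ - κ) + (κ - (1 - η) * μ) / κ) * Δ := by
  have hfront := front_run_lower_bound hGlb hGub hκμ hη1 hΔ0.le hs0 hsM hsand
  have hback := slippage_gap_lower_bound hGlb hGub hκ hη1 ⟨hΔ0.le, hΔM⟩ hw hGw
  linarith

/-- If `G` is `(μ,κ)`-smooth on `[0,M]` (`0 < κ < μ`,
`G 0 = 0`, `κ t ≤ G t ≤ μ t` on `[0,M]`), `Δ ∈ (0,M]`, `η ∈ [0,1]`,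
the front-run `s ≥ 0` (with `Δ + s ≤ M`) satisfies
`G (Δ+s) - G s = (1-η) G Δ`, and `w ∈ [0,M]` satisfies `G w = (1-η) G Δ`,
then the attacker's back-run `Δsand' = s + Δ - w` satisfies
`Δsand' ≥ ((ημ - (μ-κ))/(μ-κ) + (κ - (1-η)μ)/κ) Δ`. -/
theorem back_run_trade_lower_bound
    (κ μ M Δ η s w : ℝ) (G : ℝ → ℝ)
    (hκ : 0 < κ) (hκμ : κ < μ) (hM : 0 < M)
    (hG0 : G 0 = 0)
    (hGlb : ∀ t ∈ Set.Icc (0 : ℝ) M, κ * t ≤ G t)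
    (hGub : ∀ t ∈ Set.Icc (0 : ℝ) M, G t ≤ μ * t)
    (hΔ0 : 0 < Δ) (hΔM : Δ ≤ M)
    (hη0 : 0 ≤ η) (hη1 : η ≤ 1)
    (hs0 : 0 ≤ s) (hsM : Δ + s ≤ M)
    (hsand : G (Δ + s) - G s = (1 - η) * G Δ)
    (hw : w ∈ Set.Icc (0 : ℝ) M)
    (hGw : G w = (1 - η) * G Δ) :
    s + Δ - w ≥ ((η * μ - (μ - κ)) / (μ - κ) + (κ - (1 - η) * μ) / κ) * Δ :=
  back_run_trade_lower_bound_general κ μ M Δ η s w G hκ hκμ hGlb hGub hΔ0 hΔM hη1 hs0 hsM hsand hw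
    hGw
end

section
/- Let 0 < κ < μ, M > 0, and let G : ℝ → ℝ satisfy G(0) = 0 and κt ≤ G(t) ≤ μt for all t ∈ [0,M]. Let Δ ∈ (0,M], η ∈ [0,1], let u ∈ ℝ be a partial trade drift, and let s satisfy s + u ≥ 0, Δ + s + u ≤ M, and the drift-adjusted sandwich equation G(Δ + s + u) − G(s + u) = (1−η)·G(Δ). Then s + u ≥ ( (ημ − (μ−κ))/(μ−κ) )·Δ, i.e. s ≥ ( ημ/(μ−κ) − 1 )·Δ − u. -/
/-!
Bounding `G (x + Δ)` below by `κ (x + Δ)` and `G x`, `G Δ` above by `μ x`, `μ Δ`, the sandwich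
equation gives `κ (x + Δ) ≤ μ x + (1 - η) μ Δ` for the drift-shifted front-run `x = s + u`,
which rearranges to the bound.
-/

theorem sandwich_mul_le_of_smooth {κ μ M Δ η x : ℝ} {G : ℝ → ℝ}
    (hGlb : ∀ t ∈ Set.Icc (0 : ℝ) M, κ * t ≤ G t)
    (hGub : ∀ t ∈ Set.Icc (0 : ℝ) M, G t ≤ μ * t)
    (hΔ0 : 0 ≤ Δ) (hΔM : Δ ≤ M) (hη1 : η ≤ 1) (hx0 : 0 ≤ x) (hxM : Δ + x ≤ M)
    (hsand : G (Δ + x) - G x = (1 - η) * G Δ) :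
    (η * μ - (μ - κ)) * Δ ≤ (μ - κ) * x := by
  have hGΔ : G Δ ≤ μ * Δ := hGub Δ ⟨hΔ0, hΔM⟩
  have key : κ * (Δ + x) ≤ μ * x + (1 - η) * (μ * Δ) :=
    calc κ * (Δ + x) ≤ G (Δ + x) := hGlb _ ⟨by linarith, hxM⟩
      _ = G x + (1 - η) * G Δ := by linarith
      _ ≤ μ * x + (1 - η) * (μ * Δ) := by
        gcongr
        · exact hGub x ⟨hx0, by linarith⟩
  linarith

theorem sandwich_size_lower_bound_with_drift_general
    (κ μ M Δ η u s : ℝ) (G : ℝ → ℝ)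
    (hκμ : κ < μ)
    (hGlb : ∀ t ∈ Set.Icc (0 : ℝ) M, κ * t ≤ G t)
    (hGub : ∀ t ∈ Set.Icc (0 : ℝ) M, G t ≤ μ * t)
    (hΔ0 : 0 < Δ) (hΔM : Δ ≤ M)
    (hη1 : η ≤ 1)
    (hsu0 : 0 ≤ s + u) (hsuM : Δ + s + u ≤ M)
    (hsand : G (Δ + s + u) - G (s + u) = (1 - η) * G Δ) :
    s + u ≥ ((η * μ - (μ - κ)) / (μ - κ)) * Δ ∧
    s ≥ (η * μ / (μ - κ) - 1) * Δ - u := by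
  rw [add_assoc] at hsuM hsand
  have hbound := sandwich_mul_le_of_smooth hGlb hGub hΔ0.le hΔM hη1 hsu0 hsuM hsand
  have hμκ : 0 < μ - κ := sub_pos.mpr hκμ
  have hsu : (η * μ - (μ - κ)) / (μ - κ) * Δ ≤ s + u := by
    rw [div_mul_eq_mul_div, div_le_iff₀ hμκ]
    linarith
  have hcoeff : η * μ / (μ - κ) - 1 = (η * μ - (μ - κ)) / (μ - κ) := by
    field_simp
  exact ⟨hsu, by rw [hcoeff]; linarith⟩

/-- If `G` is `(μ,κ)`-smooth on `[0,M]` (`0 < κ < μ`,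
`G 0 = 0`, `κ t ≤ G t ≤ μ t` on `[0,M]`), `Δ ∈ (0,M]`, `η ∈ [0,1]`,
`u` is a partial trade drift, and `s` satisfies `s + u ≥ 0`,
`Δ + s + u ≤ M` and the drift-adjusted sandwich equation
`G (Δ + s + u) - G (s + u) = (1-η) G Δ`, then
`s + u ≥ ((ημ - (μ-κ))/(μ-κ)) Δ`, i.e. `s ≥ (ημ/(μ-κ) - 1) Δ - u`. -/
theorem sandwich_size_lower_bound_with_drift
    (κ μ M Δ η u s : ℝ) (G : ℝ → ℝ)
    (hκ : 0 < κ) (hκμ : κ < μ) (hM : 0 < M)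
    (hG0 : G 0 = 0)
    (hGlb : ∀ t ∈ Set.Icc (0 : ℝ) M, κ * t ≤ G t)
    (hGub : ∀ t ∈ Set.Icc (0 : ℝ) M, G t ≤ μ * t)
    (hΔ0 : 0 < Δ) (hΔM : Δ ≤ M)
    (hη0 : 0 ≤ η) (hη1 : η ≤ 1)
    (hsu0 : 0 ≤ s + u) (hsuM : Δ + s + u ≤ M)
    (hsand : G (Δ + s + u) - G (s + u) = (1 - η) * G Δ) :
    s + u ≥ ((η * μ - (μ - κ)) / (μ - κ)) * Δ ∧
    s ≥ (η * μ / (μ - κ) - 1) * Δ - u :=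
  sandwich_size_lower_bound_with_drift_general κ μ M Δ η u s G hκμ hGlb hGub hΔ0 hΔM hη1 hsu0 hsuM
    hsand
end

section
/- (Reverse discrete Grönwall inequality.) Let (u_k) be a real sequence and (q_k), (f_k) nonnegative real sequences. Suppose that for all naturals k ≤ r, u_r ≥ u_k − q_r · Σ_{ℓ=k+1}^{r} f_ℓ u_ℓ. Then for all naturals k ≤ r, u_r ≥ u_k · ∏_{ℓ=k+1}^{r} (1 + q_r f_ℓ)^{−1}. -/
open Finset

theorem Finset.one_add_sum_Ioc_mul_prod_Ioc {R : Type*} [CommSemiring R] (a : ℕ → R) {j r : ℕ}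
    (hjr : j ≤ r) :
    1 + ∑ ℓ ∈ Ioc j r, a ℓ * ∏ m ∈ Ioc ℓ r, (1 + a m) = ∏ m ∈ Ioc j r, (1 + a m) := by
  induction hjr using Nat.decreasingInduction with
  | self => simp
  | of_succ j hjr ih =>
    have hnotMem : j + 1 ∉ Ioc (j + 1) r := by simp
    rw [← insert_Ioc_add_one_left_eq_Ioc hjr, sum_insert hnotMem, prod_insert hnotMem, ← ih]
    ring

/-- Strong downward induction on `j`: once every later `v ℓ` is bounded, the sum telescopes
into the product. -/
theorem le_mul_prod_Ioc_of_le_add_sum_Ioc {R : Type*} [CommSemiring R] [PartialOrder R]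
    [IsOrderedRing R] {v a : ℕ → R} {r : ℕ} (ha : ∀ ℓ, 0 ≤ a ℓ)
    (hv : ∀ j ≤ r, v j ≤ v r + ∑ ℓ ∈ Ioc j r, a ℓ * v ℓ) :
    ∀ j ≤ r, v j ≤ v r * ∏ ℓ ∈ Ioc j r, (1 + a ℓ) := by
  refine Nat.strong_decreasing_induction ⟨r, fun j hj hjr => absurd hjr (by omega)⟩ ?_
  intro j ih hjr
  calc v j ≤ v r + ∑ ℓ ∈ Ioc j r, a ℓ * v ℓ := hv j hjr
    _ ≤ v r + ∑ ℓ ∈ Ioc j r, a ℓ * (v r * ∏ m ∈ Ioc ℓ r, (1 + a m)) := by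
      gcongr with ℓ hℓ
      · exact ha ℓ
      · rw [mem_Ioc] at hℓ
        exact ih ℓ hℓ.1 hℓ.2
    _ = v r * (1 + ∑ ℓ ∈ Ioc j r, a ℓ * ∏ m ∈ Ioc ℓ r, (1 + a m)) := by
      rw [mul_add, mul_sum]
      simp only [mul_one, mul_left_comm]
    _ = v r * ∏ ℓ ∈ Ioc j r, (1 + a ℓ) := by rw [one_add_sum_Ioc_mul_prod_Ioc a hjr]

/-- Reverse discrete Grönwall inequality: If `(u k)` is a
real sequence, `(q k)`, `(f k)` are nonnegative sequences, and for all
naturals `k ≤ r` we have `u r ≥ u k - q r * Σ_{ℓ=k+1}^{r} f ℓ * u ℓ`, then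
for all naturals `k ≤ r`,
`u r ≥ u k * Π_{ℓ=k+1}^{r} (1 + q r * f ℓ)⁻¹`. -/
theorem reverse_discrete_gronwall
    (u q f : ℕ → ℝ)
    (hq : ∀ k, 0 ≤ q k) (hf : ∀ k, 0 ≤ f k)
    (hrec : ∀ k r : ℕ, k ≤ r →
      u r ≥ u k - q r * ∑ ℓ ∈ Finset.Ioc k r, f ℓ * u ℓ) :
    ∀ k r : ℕ, k ≤ r →
      u r ≥ u k * ∏ ℓ ∈ Finset.Ioc k r, (1 + q r * f ℓ)⁻¹ := by
  intro k r hkr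
  have hweight : ∀ ℓ, 0 ≤ q r * f ℓ := fun ℓ => mul_nonneg (hq r) (hf ℓ)
  have hunrolled : ∀ j ≤ r, u j ≤ u r + ∑ ℓ ∈ Ioc j r, q r * f ℓ * u ℓ := by
    intro j hjr
    simp only [mul_assoc, ← mul_sum]
    linarith [hrec j r hjr]
  have hprod_pos : 0 < ∏ ℓ ∈ Ioc k r, (1 + q r * f ℓ) :=
    prod_pos fun ℓ _ => by linarith [hweight ℓ]
  rw [ge_iff_le, prod_inv_distrib, ← div_eq_mul_inv, div_le_iff₀ hprod_pos]
  exact le_mul_prod_Ioc_of_le_add_sum_Ioc hweight hunrolled k hkr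
end
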